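/- For each pair of integers n, m ≥ 1 there is a constant c = c(n,m) > 0 with the following property: if K is a vector subspace of R^{n+m} of dimension at most m, then there is a coordinate n-plane P such that dist(w, K) ≥ c for all unit vectors w ∈ P. -/

import Mathlib

open Metric Set MeasureTheory ENNReal

noncomputable section

/-- The `k`-dimensional Hausdorff content of a set in a metric space, defined via
countable covers by closed balls. -/
def hContent {X : Type*} [MetricSpace X] (k : ℕ) (S : Set X) : ℝ≥0∞ :=
  ⨅ (B : ℕ → Set X) (_ : S ⊆ ⋃ i, B i) (_ : ∀ i, ∃ x r, B i = Metric.closedBall x r),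
    ∑' i, EMetric.diam (B i) ^ k

/-- The `k`-dimensional Hausdorff measure of a set in a metric space, defined via
countable covers by closed balls of diameter at most `δ`, letting `δ → 0`. -/
def hMeasure {X : Type*} [MetricSpace X] (k : ℕ) (S : Set X) : ℝ≥0∞ :=
  ⨆ (δ : ℝ≥0∞) (_ : 0 < δ),
    ⨅ (B : ℕ → Set X) (_ : S ⊆ ⋃ i, B i)
      (_ : ∀ i, (∃ x r, B i = Metric.closedBall x r) ∧ EMetric.diam (B i) ≤ δ),
      ∑' i, EMetric.diam (B i) ^ k

/-- The closed unit cube `[0,1]^d` in `ℝ^d`. -/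
def unitCube (d : ℕ) : Set (EuclideanSpace ℝ (Fin d)) :=
  {p | ∀ i, p i ∈ Set.Icc (0 : ℝ) 1}

/-- A dyadic subcube of `[0,1]^d`: it has side length `2⁻ᵏ` and lower-left corner `z/2ᵏ`. -/
structure DyadicCube (d : ℕ) : Type where
  k : ℕ
  z : Fin d → ℕ
  hz : ∀ i, z i + 1 ≤ 2 ^ k

namespace DyadicCube

/-- The side length of a dyadic cube. -/
def side {d : ℕ} (Q : DyadicCube d) : ℝ := (2 : ℝ)⁻¹ ^ Q.k

/-- The center of a dyadic cube. -/
def center {d : ℕ} (Q : DyadicCube d) (i : Fin d) : ℝ :=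
  ((Q.z i : ℝ) + 1 / 2) * (2 : ℝ)⁻¹ ^ Q.k

/-- The dyadic cube as a (closed) subset of `ℝ^d`. -/
def toSet {d : ℕ} (Q : DyadicCube d) : Set (EuclideanSpace ℝ (Fin d)) :=
  {p | ∀ i, |p i - Q.center i| ≤ Q.side / 2}

/-- `Q.scaled λ` is the cube `λQ`, with the same center as `Q` and `λ` times the side length. -/
def scaled {d : ℕ} (Q : DyadicCube d) (lam : ℝ) : Set (EuclideanSpace ℝ (Fin d)) :=
  {p | ∀ i, |p i - Q.center i| ≤ lam * Q.side / 2}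

end DyadicCube

/-- The `(n,m)`-mapping content `H^{n,m}_∞(f, A)`: the infimum of
`∑ H^n_∞(f(Q_i)) side(Q_i)^m` over countable covers of `A` by dyadic cubes of `[0,1]^{n+m}`
with pairwise disjoint interiors. -/
def mContent (n m : ℕ) {X : Type*} [MetricSpace X]
    (f : EuclideanSpace ℝ (Fin (n + m)) → X)
    (A : Set (EuclideanSpace ℝ (Fin (n + m)))) : ℝ≥0∞ :=
  ⨅ (S : Set (DyadicCube (n + m))) (_ : A ⊆ ⋃ Q ∈ S, Q.toSet)
    (_ : S.Pairwise fun Q Q' => interior Q.toSet ∩ interior Q'.toSet = ∅),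
    ∑' Q : S, hContent n (f '' Q.1.toSet) * ENNReal.ofReal (Q.1.side ^ m)

/-- The alternative `(n,m)`-mapping content `Ĥ^{n,m}_∞(f, A)`: the infimum of
`∑ H^n_∞(f(S_i)) diam(S_i)^m` over countable covers of `A` by arbitrary subsets of
`[0,1]^{n+m}`. -/
def altMContent (n m : ℕ) {X : Type*} [MetricSpace X]
    (f : EuclideanSpace ℝ (Fin (n + m)) → X)
    (A : Set (EuclideanSpace ℝ (Fin (n + m)))) : ℝ≥0∞ :=
  ⨅ (S : ℕ → Set (EuclideanSpace ℝ (Fin (n + m)))) (_ : A ⊆ ⋃ i, S i)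
    (_ : ∀ i, S i ⊆ unitCube (n + m)),
    ∑' i, hContent n (f '' S i) * EMetric.diam (S i) ^ m

/-- The first `n` coordinates of a point of `ℝ^{n+m} = ℝ^n × ℝ^m`. -/
def xpart (n m : ℕ) (p : EuclideanSpace ℝ (Fin (n + m))) : EuclideanSpace ℝ (Fin n) :=
  WithLp.toLp 2 (fun i => p (Fin.castAdd m i))

/-- The last `m` coordinates of a point of `ℝ^{n+m} = ℝ^n × ℝ^m`. -/
def ypart (n m : ℕ) (p : EuclideanSpace ℝ (Fin (n + m))) : EuclideanSpace ℝ (Fin m) :=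
  WithLp.toLp 2 (fun j => p (Fin.natAdd n j))

/-- The point `(x, y) ∈ ℝ^{n+m}` built from `x ∈ ℝ^n`, `y ∈ ℝ^m`. -/
def pairup (n m : ℕ) (x : EuclideanSpace ℝ (Fin n)) (y : EuclideanSpace ℝ (Fin m)) :
    EuclideanSpace ℝ (Fin (n + m)) :=
  WithLp.toLp 2 (fun i => Fin.addCases (fun i₁ => x i₁) (fun j => y j) i)

/-- The horizontal slice `E_y = E ∩ (ℝ^n × {y})`. -/
def cubeSlice (n m : ℕ) (E : Set (EuclideanSpace ℝ (Fin (n + m))))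
    (y : EuclideanSpace ℝ (Fin m)) : Set (EuclideanSpace ℝ (Fin (n + m))) :=
  {p ∈ E | ypart n m p = y}

/-- `f` is `C`-bi-Lipschitz on `s`. -/
def BiLipschitzOnWith {α β : Type*} [PseudoMetricSpace α] [PseudoMetricSpace β]
    (C : ℝ) (f : α → β) (s : Set α) : Prop :=
  ∀ x ∈ s, ∀ y ∈ s, C⁻¹ * dist x y ≤ dist (f x) (f y) ∧ dist (f x) (f y) ≤ C * dist x y

/-- `(E, g)` is a Hard Sard pair for `f` with constant `C`:
(i) `g` is a globally `C`-bi-Lipschitz homeomorphism of `ℝ^{n+m}` (in particular it restricts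
to a bi-Lipschitz map on `E`);
(ii) writing `F = f ∘ g⁻¹`, for `(x,y), (x',y') ∈ g(E)` one has `F(x,y) = F(x',y')` iff `x = x'`;
(iii) the map `(x,y) ↦ (F(x,y), y)` is `C`-bi-Lipschitz on `g(E)`, where `X × ℝ^m` carries the
max metric.  Conditions (ii) and (iii) are expressed at points `p = g⁻¹(x,y)`, `q = g⁻¹(x',y')`
of `E`. -/
def IsHardSardPairWith (n m : ℕ) {X : Type*} [MetricSpace X]
    (f : EuclideanSpace ℝ (Fin (n + m)) → X)
    (E : Set (EuclideanSpace ℝ (Fin (n + m))))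
    (g : EuclideanSpace ℝ (Fin (n + m)) → EuclideanSpace ℝ (Fin (n + m)))
    (C : ℝ) : Prop :=
  Function.Surjective g ∧
  BiLipschitzOnWith C g Set.univ ∧
  (∀ p ∈ E, ∀ q ∈ E, (f p = f q ↔ xpart n m (g p) = xpart n m (g q))) ∧
  (∀ p ∈ E, ∀ q ∈ E,
    C⁻¹ * dist (g p) (g q) ≤ dist (f p, ypart n m (g p)) (f q, ypart n m (g q)) ∧
    dist (f p, ypart n m (g p)) (f q, ypart n m (g q)) ≤ C * dist (g p) (g q))

/-- `E` is a Hard Sard set for `f` with constant `C`. -/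
def IsHardSardSetWith (n m : ℕ) {X : Type*} [MetricSpace X]
    (f : EuclideanSpace ℝ (Fin (n + m)) → X)
    (E : Set (EuclideanSpace ℝ (Fin (n + m)))) (C : ℝ) : Prop :=
  ∃ g, IsHardSardPairWith n m f E g C

/-- `sup_{x,y ∈ s} | d(f(x), f(y)) - N(x - y) |`. -/
def mdSup {d : ℕ} {X : Type*} [MetricSpace X] (f : EuclideanSpace ℝ (Fin d) → X)
    (s : Set (EuclideanSpace ℝ (Fin d))) (N : Seminorm ℝ (EuclideanSpace ℝ (Fin d))) : ℝ :=
  ⨆ x : s, ⨆ y : s, |dist (f x.1) (f y.1) - N (x.1 - y.1)|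

/-- `md_f` on a set `s` (a cube of side length `side`):
`side⁻¹ · inf_N sup_{x,y ∈ s} | d(f(x), f(y)) - N(x-y) |`, the infimum being over all
seminorms `N` on `ℝ^d`. -/
def mdf {d : ℕ} {X : Type*} [MetricSpace X] (f : EuclideanSpace ℝ (Fin d) → X)
    (s : Set (EuclideanSpace ℝ (Fin d))) (side : ℝ) : ℝ :=
  side⁻¹ * ⨅ N : Seminorm ℝ (EuclideanSpace ℝ (Fin d)), mdSup f s N

/-- The coordinate plane spanned by the standard basis vectors `e_i`, `i ∈ s`. -/
def coordPlane {d : ℕ} (s : Finset (Fin d)) : Submodule ℝ (EuclideanSpace ℝ (Fin d)) :=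
  Submodule.span ℝ {v | ∃ i ∈ s, v = EuclideanSpace.single i (1 : ℝ)}

/-!
Orthonormal `n`-frames `u` in `ℝ^{n+m}` form a compact set. For each frame, choosing `n`
coordinates `j` whose vectors `(⟪u i, e_j⟫)ᵢ` form a basis of `ℝⁿ` gives a coordinate
`n`-plane `P` meeting the common kernel of the `⟪u i, ·⟫` only in `0`, so `∑ ⟪u i, w⟫²` is
positive on the unit sphere of `P`; by compactness the lower bound can be taken uniform in `u`.
Given `K`, run this on a frame in `Kᗮ`: there `∑ ⟪u i, w⟫² = ∑ ⟪u i, w - y⟫² ≤ ‖w - y‖²` for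
every `y ∈ K` by Bessel's inequality.
-/

open Module Function

theorem IsCompact.exists_pos_forall_exists_forall_le {X Y ι : Type*} [TopologicalSpace X]
    [TopologicalSpace Y] {A : Set X} (hA : IsCompact A) {B : ι → Set Y}
    (hB : ∀ i, IsCompact (B i)) {f : X → Y → ℝ} (hf : Continuous (uncurry f))
    (hpos : ∀ x ∈ A, ∃ i, ∀ y ∈ B i, 0 < f x y) :
    ∃ c > 0, ∀ x ∈ A, ∃ i, ∀ y ∈ B i, c ≤ f x y := by
  refine hA.induction_on (p := fun S => ∃ c > 0, ∀ x ∈ S, ∃ i, ∀ y ∈ B i, c ≤ f x y)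
    ⟨1, one_pos, by simp⟩ (fun S T hST ⟨c, hc, hT⟩ => ⟨c, hc, fun x hx => hT x (hST hx)⟩)
    (fun S T ⟨c, hc, hS⟩ ⟨c', hc', hT⟩ => ⟨min c c', lt_min hc hc', ?_⟩) fun x hx => ?_
  · rintro z (hz | hz)
    · obtain ⟨i, hi⟩ := hS z hz
      exact ⟨i, fun y hy => (min_le_left _ _).trans (hi y hy)⟩
    · obtain ⟨i, hi⟩ := hT z hz
      exact ⟨i, fun y hy => (min_le_right _ _).trans (hi y hy)⟩
  · obtain ⟨i, hi⟩ := hpos x hx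
    obtain ⟨a, ha, hle⟩ := (hB i).exists_forall_le'
      (hf.comp (Continuous.prodMk_right x)).continuousOn hi
    refine ⟨{x' | ∀ y ∈ B i, a / 2 ≤ f x' y}, mem_nhdsWithin_of_mem_nhds ?_,
      a / 2, half_pos ha, fun x' hx' => ⟨i, hx'⟩⟩
    -- tube lemma: the strict bound `a / 2 < a ≤ f x` on the compact `B i` persists near `x`
    refine (hB i).eventually_forall_of_forall_eventually fun y hy => ?_
    exact ((hf.tendsto (x, y)).eventually
      (lt_mem_nhds ((half_lt_self ha).trans_le (hle y hy)))).mono fun z hz => hz.le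

theorem isCompact_setOf_orthonormal {𝕜 ι E : Type*} [RCLike 𝕜] [Fintype ι]
    [NormedAddCommGroup E] [InnerProductSpace 𝕜 E] [FiniteDimensional 𝕜 E] :
    IsCompact {u : ι → E | Orthonormal 𝕜 u} := by
  classical
  have := FiniteDimensional.proper_rclike 𝕜 E
  refine (isCompact_closedBall (0 : ι → E) 1).of_isClosed_subset ?_ fun u hu => ?_
  · simp only [orthonormal_iff_ite, Set.ofPred_forall]
    exact isClosed_iInter fun i => isClosed_iInter fun j =>
      isClosed_eq (by fun_prop) continuous_const
  · exact mem_closedBall_zero_iff.2 ((pi_norm_le_iff_of_nonneg zero_le_one).2 fun i => (hu.1 i).le)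

theorem Submodule.exists_orthonormal_of_le_finrank {𝕜 E : Type*} [RCLike 𝕜]
    [NormedAddCommGroup E] [InnerProductSpace 𝕜 E] (K : Submodule 𝕜 E) [FiniteDimensional 𝕜 K]
    {n : ℕ} (h : n ≤ finrank 𝕜 K) : ∃ u : Fin n → E, Orthonormal 𝕜 u ∧ ∀ i, u i ∈ K :=
  let b := stdOrthonormalBasis 𝕜 K
  ⟨fun i => b (Fin.castLE h i),
    (b.orthonormal.comp _ (Fin.castLE_injective h)).comp_linearIsometry K.subtypeₗᵢ,
    fun _ => (b _).2⟩

theorem exists_card_eq_finrank_range_disjoint_coordPlane {d : ℕ} {F : Type*} [AddCommGroup F]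
    [Module ℝ F] (L : EuclideanSpace ℝ (Fin d) →ₗ[ℝ] F) :
    ∃ s : Finset (Fin d), s.card = finrank ℝ (LinearMap.range L) ∧
      Disjoint (coordPlane s) (LinearMap.ker L) := by
  classical
  set v := fun i => L (EuclideanSpace.single i 1)
  obtain ⟨b, -, -, hspan, hli⟩ :=
    exists_linearIndepOn_extension (linearIndepOn_empty ℝ v) (empty_subset univ)
  have hcoord : coordPlane b.toFinset =
      Submodule.span ℝ (range fun i : b => EuclideanSpace.single (i : Fin d) (1 : ℝ)) := by
    unfold coordPlane
    congr 1
    ext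
    simp [eq_comm]
  have hrange : LinearMap.range L = Submodule.span ℝ (v '' b) := by
    refine le_antisymm ?_ (Submodule.span_le.2 (image_subset_iff.2 fun i _ => ⟨_, rfl⟩))
    rw [LinearMap.range_eq_map, ← (EuclideanSpace.basisFun (Fin d) ℝ).toBasis.span_eq,
      Submodule.map_span, Submodule.span_le]
    rintro _ ⟨_, ⟨i, rfl⟩, rfl⟩
    exact hspan ⟨i, mem_univ i, by simp [v]⟩
  refine ⟨b.toFinset, ?_, hcoord ▸ Submodule.range_ker_disjoint hli⟩
  rw [hrange, image_eq_range, finrank_span_eq_card hli, toFinset_card]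

theorem Orthonormal.exists_coordPlane_sum_inner_sq_pos {ι : Type*} [Fintype ι] {d : ℕ}
    {u : ι → EuclideanSpace ℝ (Fin d)} (hu : Orthonormal ℝ u) :
    ∃ s : Finset (Fin d), s.card = Fintype.card ι ∧
      ∀ w ∈ coordPlane s, w ≠ 0 → 0 < ∑ i, inner ℝ (u i) w ^ 2 := by
  classical
  let L : EuclideanSpace ℝ (Fin d) →ₗ[ℝ] (ι → ℝ) := LinearMap.pi fun i => innerₛₗ ℝ (u i)
  have hL : LinearMap.range L = ⊤ := LinearMap.range_eq_top.2 fun c =>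
    ⟨∑ j, c j • u j, funext fun i => hu.inner_right_fintype c i⟩
  obtain ⟨s, hs, hdisj⟩ := exists_card_eq_finrank_range_disjoint_coordPlane L
  refine ⟨s, by rw [hs, hL, finrank_top, Module.finrank_fintype_fun_eq_card], fun w hw hw0 => ?_⟩
  obtain ⟨i, hi⟩ : ∃ i, inner ℝ (u i) w ≠ 0 := by
    by_contra! h
    exact hw0 (Submodule.disjoint_def.1 hdisj w hw (funext h))
  exact Finset.sum_pos' (fun i _ => sq_nonneg _) ⟨i, Finset.mem_univ i, sq_pos_of_ne_zero hi⟩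

theorem Orthonormal.sum_inner_sq_le_dist_sq {ι E : Type*} [Fintype ι] [NormedAddCommGroup E]
    [InnerProductSpace ℝ E] {K : Submodule ℝ E} {u : ι → E} (hu : Orthonormal ℝ u)
    (huK : ∀ i, u i ∈ Kᗮ) (w : E) {y : E} (hy : y ∈ K) :
    ∑ i, inner ℝ (u i) w ^ 2 ≤ dist w y ^ 2 := by
  have hinner : ∀ i, inner ℝ (u i) w = inner ℝ (u i) (w - y) := fun i => by
    rw [inner_sub_right, Submodule.inner_left_of_mem_orthogonal hy (huK i), sub_zero]
  simpa [hinner, dist_eq_norm, sq_abs] using hu.sum_inner_products_le (x := w - y) (s := .univ)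

theorem coordinate_plane_far_general (n m : ℕ) :
    ∃ c : ℝ, 0 < c ∧
      ∀ K : Submodule ℝ (EuclideanSpace ℝ (Fin (n + m))),
        Module.finrank ℝ K ≤ m →
        ∃ s : Finset (Fin (n + m)), s.card = n ∧
          ∀ w ∈ coordPlane s, ‖w‖ = 1 →
            c ≤ Metric.infDist w (K : Set (EuclideanSpace ℝ (Fin (n + m)))) := by
  have hgood : ∀ u : Fin n → EuclideanSpace ℝ (Fin (n + m)), Orthonormal ℝ u →
      ∃ s : {s : Finset (Fin (n + m)) // s.card = n},
        ∀ w ∈ sphere 0 1 ∩ coordPlane s.1, 0 < ∑ i, inner ℝ (u i) w ^ 2 := fun u hu => by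
    obtain ⟨s, hs, hpos⟩ := hu.exists_coordPlane_sum_inner_sq_pos
    exact ⟨⟨s, by simpa using hs⟩, fun w ⟨hw1, hw⟩ =>
      hpos w hw (ne_zero_of_mem_sphere one_ne_zero ⟨w, hw1⟩)⟩
  obtain ⟨c, hc, hframe⟩ :=
    (isCompact_setOf_orthonormal (𝕜 := ℝ)).exists_pos_forall_exists_forall_le
    (B := fun s : {s : Finset (Fin (n + m)) // s.card = n} =>
      sphere (0 : EuclideanSpace ℝ (Fin (n + m))) 1 ∩ coordPlane s.1)
    (fun s => (isCompact_sphere 0 1).inter_right (coordPlane s.1).closed_of_finiteDimensional)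
    (by fun_prop) hgood
  refine ⟨√c, Real.sqrt_pos.2 hc, fun K hK => ?_⟩
  obtain ⟨u, hu, huK⟩ := Kᗮ.exists_orthonormal_of_le_finrank (n := n) <| by
    have := K.finrank_add_finrank_orthogonal
    rw [finrank_euclideanSpace_fin] at this
    omega
  obtain ⟨⟨s, hs⟩, hsu⟩ := hframe u hu
  refine ⟨s, hs, fun w hw hw1 => (le_infDist ⟨0, K.zero_mem⟩).2 fun y hy => ?_⟩
  calc √c ≤ √(∑ i, inner ℝ (u i) w ^ 2) := Real.sqrt_le_sqrt (hsu w ⟨by simpa using hw1, hw⟩)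
    _ ≤ √(dist w y ^ 2) := Real.sqrt_le_sqrt (hu.sum_inner_sq_le_dist_sq huK w hy)
    _ = dist w y := Real.sqrt_sq dist_nonneg

/-- **Lemma (quantitative coordinate plane avoidance).**  For each `n, m ≥ 1` there is
`c = c(n,m) > 0` such that for every subspace `K ⊆ ℝ^{n+m}` of dimension at most `m` there is a
coordinate `n`-plane `P` with `dist(w, K) ≥ c` for every unit vector `w ∈ P`. -/
theorem coordinate_plane_far (n m : ℕ) (hn : 1 ≤ n) (hm : 1 ≤ m) :
    ∃ c : ℝ, 0 < c ∧
      ∀ K : Submodule ℝ (EuclideanSpace ℝ (Fin (n + m))),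
        Module.finrank ℝ K ≤ m →
        ∃ s : Finset (Fin (n + m)), s.card = n ∧
          ∀ w ∈ coordPlane s, ‖w‖ = 1 →
            c ≤ Metric.infDist w (K : Set (EuclideanSpace ℝ (Fin (n + m)))) :=
  coordinate_plane_far_general n m

end
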